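/- arXiv:1309.2542 — 3 statements merged into one kernel-verified Lean document; each statement's English description precedes it below -/
import Mathlib

section
/- The cubic element C₃ = Σ_{i,j,k,l,m} c_{ij}^k b_{im} b_{jl} ι(e_k) ι(e_l) ι(e_m) of U(g) is central: it commutes with ι(x) for every x ∈ g. (This is the purely even analogue of the paper's cubic Casimir element for an odd invariant form, with all signs from the Sign Rule equal to +1.) -/
/-!
Let `f j = ∑ l, binv j l • e l` be the `B`-dual family of `e`, so that
`C₃ = ∑ i, Q (e i) * ι (f i)` with `Q a = ∑ j, ι ⁅a, e j⁆ * ι (f j)`. Invariance of `B` says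
that `ad x` is `B`-skew, and this makes the Casimir tensor `∑ i, e i ⊗ f i` annihilated by
`ad x`. Consequently, for every linear `S : g → U(g)`,
`⁅ι x, ∑ i, S (e i) * ι (f i)⁆ = ∑ i, (⁅ι x, S (e i)⁆ - S ⁅x, e i⁆) * ι (f i)`.
Taking `S = ι ∘ ad a` shows that `Q` is `g`-equivariant, and then taking `S = Q` shows that
`C₃` commutes with `ι x`.
-/

section DualPair

variable {K V M ι : Type*} [CommRing K] [AddCommGroup V] [Module K V] [AddCommGroup M]
  [Module K M] [Fintype ι]

theorem sum_apply_skew_add_apply_skew_eq_zero_of_dual (B : V →ₗ[K] V →ₗ[K] K) (δ : V → V)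
    (hδ : ∀ u v, B (δ u) v + B u (δ v) = 0) (e f : ι → V)
    (he : ∀ y, ∑ n, B y (f n) • e n = y) (hf : ∀ y, ∑ n, B (e n) y • f n = y)
    (φ : V →ₗ[K] V →ₗ[K] M) :
    ∑ i, (φ (δ (e i)) (f i) + φ (e i) (δ (f i))) = 0 := by
  have hleft : ∑ i, φ (δ (e i)) (f i) = ∑ i, ∑ n, B (δ (e i)) (f n) • φ (e n) (f i) := by
    refine Finset.sum_congr rfl fun i _ => ?_
    conv_lhs => rw [← he (δ (e i))]
    simp [map_sum, map_smul, LinearMap.sum_apply]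
  have hright : ∑ i, φ (e i) (δ (f i)) = ∑ i, ∑ n, B (e i) (δ (f n)) • φ (e n) (f i) := by
    rw [Finset.sum_comm]
    refine Finset.sum_congr rfl fun i _ => ?_
    conv_lhs => rw [← hf (δ (f i))]
    simp [map_sum, map_smul]
  rw [Finset.sum_add_distrib, hleft, hright, ← Finset.sum_add_distrib]
  refine Finset.sum_eq_zero fun i _ => ?_
  rw [← Finset.sum_add_distrib]
  exact Finset.sum_eq_zero fun n _ => by rw [← add_smul, hδ, zero_smul]

variable [DecidableEq ι] (B : V →ₗ[K] V →ₗ[K] K) (e : Module.Basis ι K V) (P : Matrix ι ι K)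

theorem sum_apply_basis_smul_dual_eq_self (hP : (Matrix.of fun i j => B (e i) (e j)) * P = 1)
    (y : V) : ∑ n, B y (e n) • ∑ l, P n l • e l = y := by
  have hid : ∑ n, (B.flip (e n)).smulRight (∑ l, P n l • e l) = LinearMap.id := by
    refine e.ext fun k => ?_
    have hkl : ∀ l, ∑ n, B (e k) (e n) * P n l = if k = l then 1 else 0 := fun l => by
      simpa [Matrix.mul_apply, Matrix.one_apply] using congrFun (congrFun hP k) l
    simp only [LinearMap.sum_apply, LinearMap.smulRight_apply, LinearMap.flip_apply,
      LinearMap.id_apply, Finset.smul_sum, smul_smul]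
    rw [Finset.sum_comm]
    simp [← Finset.sum_smul, hkl]
  simpa using LinearMap.congr_fun hid y

theorem sum_apply_dual_smul_basis_eq_self (hP : P * (Matrix.of fun i j => B (e j) (e i)) = 1)
    (y : V) : ∑ n, B y (∑ l, P n l • e l) • e n = y := by
  have hid : ∑ n, (B.flip (∑ l, P n l • e l)).smulRight (e n) = LinearMap.id := by
    refine e.ext fun k => ?_
    have hnk : ∀ n, ∑ l, P n l * B (e k) (e l) = if n = k then 1 else 0 := fun n => by
      simpa [Matrix.mul_apply, Matrix.one_apply] using congrFun (congrFun hP n) k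
    simp [hnk]
  simpa using LinearMap.congr_fun hid y

end DualPair

theorem apply_lie_add_apply_lie_eq_zero {K L : Type*} [CommRing K] [LieRing L] [LieAlgebra K L]
    (B : L →ₗ[K] L →ₗ[K] K) (hB : ∀ x y z, B ⁅x, y⁆ z = B x ⁅y, z⁆) (x u v : L) :
    B ⁅x, u⁆ v + B u ⁅x, v⁆ = 0 := by
  rw [← hB, ← lie_skew, map_neg, LinearMap.neg_apply, neg_add_cancel]

section LieDual

attribute [local instance] LieRing.ofAssociativeRing

variable {K L A ι : Type*} [CommRing K] [LieRing L] [LieAlgebra K L] [Ring A] [Algebra K A]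
  [Fintype ι] (ρ : L →ₗ⁅K⁆ A) (e f : ι → L)

def lieDualSum : L →ₗ[K] A where
  toFun a := ∑ j, ρ ⁅a, e j⁆ * ρ (f j)
  map_add' a b := by simp [add_mul, Finset.sum_add_distrib]
  map_smul' t a := by simp [Finset.smul_sum]

@[simp]
theorem lieDualSum_apply (a : L) : lieDualSum ρ e f a = ∑ j, ρ ⁅a, e j⁆ * ρ (f j) := rfl

theorem sum_structConst_smul_eq_sum_lieDualSum (c : ι → ι → ι → K)
    (hc : ∀ i j, ⁅e i, e j⁆ = ∑ k, c i j k • e k) (P : Matrix ι ι K) :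
    ∑ i, ∑ j, ∑ k, ∑ l, ∑ m, (c i j k * P i m * P j l) • (ρ (e k) * ρ (e l) * ρ (e m)) =
      ∑ i, lieDualSum ρ e (fun j => ∑ l, P j l • e l) (e i) * ρ (∑ m, P i m • e m) := by
  simp only [lieDualSum_apply, hc, map_sum, map_smul, Finset.sum_mul,
    Finset.mul_sum, smul_mul_assoc, mul_smul_comm, Finset.smul_sum, smul_smul]
  refine Finset.sum_congr rfl fun i _ => ?_
  conv_rhs => rw [Finset.sum_comm]
  refine Finset.sum_congr rfl fun j _ => ?_
  rw [Finset.sum_comm_cycle]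
  refine Finset.sum_congr rfl fun m _ => ?_
  rw [Finset.sum_comm]
  refine Finset.sum_congr rfl fun l _ => Finset.sum_congr rfl fun k _ => ?_
  congr 1
  ring

theorem lie_sum_mul_dual (B : L →ₗ[K] L →ₗ[K] K) (hB : ∀ x y z, B ⁅x, y⁆ z = B x ⁅y, z⁆)
    (he : ∀ y, ∑ n, B y (f n) • e n = y) (hf : ∀ y, ∑ n, B (e n) y • f n = y)
    (S : L →ₗ[K] A) (x : L) :
    ⁅ρ x, ∑ i, S (e i) * ρ (f i)⁆ = ∑ i, (⁅ρ x, S (e i)⁆ - S ⁅x, e i⁆) * ρ (f i) := by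
  have hcancel := sum_apply_skew_add_apply_skew_eq_zero_of_dual B (fun y => ⁅x, y⁆)
    (apply_lie_add_apply_lie_eq_zero B hB x) e f he hf
    ((LinearMap.mul K A).compl₁₂ S ρ.toLinearMap)
  simp only [LinearMap.compl₁₂_apply, LinearMap.mul_apply', LieHom.coe_toLinearMap] at hcancel
  rw [lie_sum, ← sub_zero (∑ i, _), ← hcancel, ← Finset.sum_sub_distrib]
  refine Finset.sum_congr rfl fun i _ => ?_
  rw [LieHom.map_lie]
  simp only [LieRing.of_associative_ring_bracket]
  noncomm_ring

theorem lie_lieDualSum (B : L →ₗ[K] L →ₗ[K] K) (hB : ∀ x y z, B ⁅x, y⁆ z = B x ⁅y, z⁆)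
    (he : ∀ y, ∑ n, B y (f n) • e n = y) (hf : ∀ y, ∑ n, B (e n) y • f n = y) (x a : L) :
    ⁅ρ x, lieDualSum ρ e f a⁆ = lieDualSum ρ e f ⁅x, a⁆ := by
  have := lie_sum_mul_dual ρ e f B hB he hf (ρ.toLinearMap ∘ₗ LieAlgebra.ad K L a) x
  simp only [LinearMap.comp_apply, LieAlgebra.ad_apply, LieHom.coe_toLinearMap] at this
  simp only [lieDualSum_apply, this]
  refine Finset.sum_congr rfl fun j _ => ?_
  rw [← LieHom.map_lie, ← map_sub, leibniz_lie, add_sub_cancel_right]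

theorem commute_sum_lieDualSum_mul (B : L →ₗ[K] L →ₗ[K] K)
    (hB : ∀ x y z, B ⁅x, y⁆ z = B x ⁅y, z⁆)
    (he : ∀ y, ∑ n, B y (f n) • e n = y) (hf : ∀ y, ∑ n, B (e n) y • f n = y) (x : L) :
    Commute (ρ x) (∑ i, lieDualSum ρ e f (e i) * ρ (f i)) := by
  rw [commute_iff_lie_eq, lie_sum_mul_dual ρ e f B hB he hf]
  simp only [lie_lieDualSum ρ e f B hB he hf, sub_self, zero_mul, Finset.sum_const_zero]

end LieDual

open UniversalEnvelopingAlgebra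

theorem cubic_casimir_central_general
    {d : ℕ} {g : Type*} [LieRing g] [LieAlgebra ℂ g]
    (B : g →ₗ[ℂ] g →ₗ[ℂ] ℂ)
    (hB_symm : ∀ x y : g, B x y = B y x)
    (hB_inv : ∀ x y z : g, B ⁅x, y⁆ z = B x ⁅y, z⁆)
    (e : Module.Basis (Fin d) ℂ g)
    (binv : Matrix (Fin d) (Fin d) ℂ)
    (h1 : (Matrix.of fun i j => B (e i) (e j)) * binv = 1)
    (h2 : binv * (Matrix.of fun i j => B (e i) (e j)) = 1)
    (c : Fin d → Fin d → Fin d → ℂ)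
    (hc : ∀ i j : Fin d, ⁅e i, e j⁆ = ∑ k : Fin d, c i j k • e k)
    (C₃ : UniversalEnvelopingAlgebra ℂ g)
    (hC₃ : C₃ = ∑ i : Fin d, ∑ j : Fin d, ∑ k : Fin d, ∑ l : Fin d, ∑ m : Fin d,
      (c i j k * binv i m * binv j l) • (ι ℂ (e k) * ι ℂ (e l) * ι ℂ (e m))) :
    ∀ x : g, ι ℂ x * C₃ = C₃ * ι ℂ x := by
  intro x
  have hGram : (Matrix.of fun i j => B (e j) (e i)) = Matrix.of fun i j => B (e i) (e j) := by
    ext i j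
    exact hB_symm _ _
  have he := sum_apply_dual_smul_basis_eq_self B e binv (hGram ▸ h2)
  have hf : ∀ y, ∑ n, B (e n) y • ∑ l, binv n l • e l = y := fun y => by
    simpa only [hB_symm y] using sum_apply_basis_smul_dual_eq_self B e binv h1 y
  rw [hC₃, sum_structConst_smul_eq_sum_lieDualSum (ι ℂ) e c hc binv]
  exact (commute_sum_lieDualSum_mul (ι ℂ) e _ B hB_inv he hf x).eq

/-- The cubic element
`C₃ = ∑ i j k l m, (c i j k * binv i m * binv j l) • ι (e k) * ι (e l) * ι (e m)`
of the universal enveloping algebra is central: it commutes with `ι x` for every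
`x ∈ g`.  (Purely even analogue of the paper's cubic Casimir element.) -/
theorem cubic_casimir_central
    {d : ℕ} {g : Type*} [LieRing g] [LieAlgebra ℂ g]
    (B : g →ₗ[ℂ] g →ₗ[ℂ] ℂ)
    (hB_symm : ∀ x y : g, B x y = B y x)
    (hB_inv : ∀ x y z : g, B ⁅x, y⁆ z = B x ⁅y, z⁆)
    (hB_nondeg : ∀ x : g, (∀ y : g, B x y = 0) → x = 0)
    (e : Module.Basis (Fin d) ℂ g)
    (binv : Matrix (Fin d) (Fin d) ℂ)
    (h1 : (Matrix.of fun i j => B (e i) (e j)) * binv = 1)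
    (h2 : binv * (Matrix.of fun i j => B (e i) (e j)) = 1)
    (c : Fin d → Fin d → Fin d → ℂ)
    (hc : ∀ i j : Fin d, ⁅e i, e j⁆ = ∑ k : Fin d, c i j k • e k)
    (C₃ : UniversalEnvelopingAlgebra ℂ g)
    (hC₃ : C₃ = ∑ i : Fin d, ∑ j : Fin d, ∑ k : Fin d, ∑ l : Fin d, ∑ m : Fin d,
      (c i j k * binv i m * binv j l) • (ι ℂ (e k) * ι ℂ (e l) * ι ℂ (e m))) :
    ∀ x : g, ι ℂ x * C₃ = C₃ * ι ℂ x :=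
  cubic_casimir_central_general B hB_symm hB_inv e binv h1 h2 c hc C₃ hC₃
end

section
/- For every x ∈ g and every n ∈ ℤ, the element Σ_{i,j} b_{ij} ι(t^{−n} ⊗ e_i) ι(t^{n} ⊗ e_j) of U(g^{(1)}) commutes with ι(1 ⊗ x) (here 1 = t^0). -/
open TensorProduct LaurentPolynomial UniversalEnvelopingAlgebra

/-- The loop algebra `ℂ[t,t⁻¹] ⊗[ℂ] g` is a complex Lie algebra (the Lie bracket of
the base change is in particular ℂ-bilinear). -/
noncomputable instance loopLieAlgebra {g : Type*} [LieRing g] [LieAlgebra ℂ g] :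
    LieAlgebra ℂ (LaurentPolynomial ℂ ⊗[ℂ] g) where
  lie_smul c x y :=
    calc ⁅x, c • y⁆ = ⁅x, (algebraMap ℂ (LaurentPolynomial ℂ) c) • y⁆ := by
          rw [algebraMap_smul]
      _ = (algebraMap ℂ (LaurentPolynomial ℂ) c) • ⁅x, y⁆ := LieAlgebra.lie_smul _ _ _
      _ = c • ⁅x, y⁆ := algebraMap_smul _ _ _

/-! Let `F` be the matrix of `ad x` in the basis `e` and `G` the Gram matrix of `B`. Invariance
of `B` says `Fᵀ G = -G F`, hence `F C + C Fᵀ = 0` for `C = G⁻¹`: the tensor `∑ C i j • eᵢ ⊗ eⱼ`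
is annihilated by `ad x`. In the enveloping algebra, commutation with `ι(1 ⊗ x)` is a derivation
acting on `ι(tᵐ ⊗ y)` as `ad x` on `y`, so its value on `∑ C i j • ι(t⁻ⁿ ⊗ eᵢ) ι(tⁿ ⊗ eⱼ)`, the
image of that tensor under a bilinear map, is zero. -/

open Module Matrix

section CasimirPairing

variable {R M N ι : Type*} [CommRing R] [AddCommGroup M] [Module R M] [AddCommGroup N]
  [Module R N] [Fintype ι] (e : Basis ι R M)

noncomputable def casimirPairing (C : Matrix ι ι R) (β : M →ₗ[R] M →ₗ[R] N) : N :=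
  ∑ i, ∑ j, C i j • β (e i) (e j)

lemma casimirPairing_add_left (C C' : Matrix ι ι R) (β : M →ₗ[R] M →ₗ[R] N) :
    casimirPairing e (C + C') β = casimirPairing e C β + casimirPairing e C' β := by
  simp only [casimirPairing, Matrix.add_apply, add_smul, Finset.sum_add_distrib]

lemma casimirPairing_add_right (C : Matrix ι ι R) (β β' : M →ₗ[R] M →ₗ[R] N) :
    casimirPairing e C (β + β') = casimirPairing e C β + casimirPairing e C β' := by
  simp only [casimirPairing, LinearMap.add_apply, smul_add, Finset.sum_add_distrib]

variable [DecidableEq ι]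

lemma Module.Basis.apply_eq_sum_toMatrix (f : M →ₗ[R] M) (i : ι) :
    f (e i) = ∑ k, LinearMap.toMatrix e e f k i • e k := by
  rw [← Matrix.toLin_self e e, Matrix.toLin_toMatrix]

lemma casimirPairing_comp (C : Matrix ι ι R) (β : M →ₗ[R] M →ₗ[R] N)
    (f : M →ₗ[R] M) :
    casimirPairing e C (β ∘ₗ f) = casimirPairing e (LinearMap.toMatrix e e f * C) β := by
  simp only [casimirPairing, LinearMap.comp_apply, e.apply_eq_sum_toMatrix f, map_sum,
    map_smul, LinearMap.sum_apply, LinearMap.smul_apply, Finset.smul_sum, smul_smul,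
    Matrix.mul_apply, Finset.sum_smul]
  simp only [mul_comm (C _ _)]
  rw [Finset.sum_comm_cycle]
  exact Finset.sum_congr rfl fun p _ => Finset.sum_comm

lemma casimirPairing_compl₂ (C : Matrix ι ι R) (β : M →ₗ[R] M →ₗ[R] N)
    (f : M →ₗ[R] M) :
    casimirPairing e C (β.compl₂ f) =
      casimirPairing e (C * (LinearMap.toMatrix e e f)ᵀ) β := by
  simp only [casimirPairing, LinearMap.compl₂_apply, e.apply_eq_sum_toMatrix f, map_sum,
    map_smul, Finset.smul_sum, smul_smul, Matrix.mul_apply, Matrix.transpose_apply,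
    Finset.sum_smul]
  exact Finset.sum_congr rfl fun i _ => Finset.sum_comm

lemma toMatrix_mul_add_mul_transpose_eq_zero {B : M →ₗ[R] M →ₗ[R] R} {f : M →ₗ[R] M}
    (hf : B.IsSkewAdjoint f) {C : Matrix ι ι R} (hC : LinearMap.toMatrix₂ e e B * C = 1) :
    LinearMap.toMatrix e e f * C + C * (LinearMap.toMatrix e e f)ᵀ = 0 := by
  set G := LinearMap.toMatrix₂ e e B
  set F := LinearMap.toMatrix e e f
  have hFG : Fᵀ * G = -(G * F) := by
    have h := congrArg (LinearMap.toMatrix₂ e e)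
      (LinearMap.isAdjointPair_iff_comp_eq_compl₂ (g := -f) |>.mp hf)
    rwa [LinearMap.toMatrix₂_comp e e, LinearMap.toMatrix₂_compl₂ e e, map_neg,
      Matrix.mul_neg] at h
  have hCG : C * G = 1 := mul_eq_one_comm.mp hC
  calc F * C + C * Fᵀ = F * C + C * (Fᵀ * G) * C := by
        rw [Matrix.mul_assoc, Matrix.mul_assoc, hC, Matrix.mul_one]
    _ = F * C - C * G * F * C := by
        rw [hFG, Matrix.mul_neg, Matrix.neg_mul, ← sub_eq_add_neg, Matrix.mul_assoc C G]
    _ = 0 := by rw [hCG, Matrix.one_mul, sub_self]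

lemma casimirPairing_comp_add_compl₂_eq_zero {B : M →ₗ[R] M →ₗ[R] R} {f : M →ₗ[R] M}
    (hf : B.IsSkewAdjoint f) {C : Matrix ι ι R} (hC : LinearMap.toMatrix₂ e e B * C = 1)
    (β : M →ₗ[R] M →ₗ[R] N) :
    casimirPairing e C (β ∘ₗ f + β.compl₂ f) = 0 := by
  rw [casimirPairing_add_right, casimirPairing_comp, casimirPairing_compl₂,
    ← casimirPairing_add_left, toMatrix_mul_add_mul_transpose_eq_zero e hf hC]
  simp [casimirPairing]

end CasimirPairing

lemma commute_casimirPairing_mul {R M ι A : Type*} [CommRing R] [AddCommGroup M] [Module R M]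
    [Fintype ι] [DecidableEq ι] [Ring A] [Algebra R A] (e : Basis ι R M)
    {B : M →ₗ[R] M →ₗ[R] R} {f : M →ₗ[R] M} (hf : B.IsSkewAdjoint f)
    {C : Matrix ι ι R} (hC : LinearMap.toMatrix₂ e e B * C = 1) (u v : M →ₗ[R] A) {X : A}
    (hu : ∀ y, X * u y - u y * X = u (f y)) (hv : ∀ y, X * v y - v y * X = v (f y)) :
    Commute X (casimirPairing e C ((LinearMap.mul R A).compl₁₂ u v)) := by
  set β := (LinearMap.mul R A).compl₁₂ u v
  have hleibniz : ∀ a b : A,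
      X * (a * b) - a * b * X = (X * a - a * X) * b + a * (X * b - b * X) :=
    fun a b => by noncomm_ring
  have hcomm : X * casimirPairing e C β - casimirPairing e C β * X =
      casimirPairing e C (β ∘ₗ f + β.compl₂ f) := by
    simp only [casimirPairing, Finset.mul_sum, Finset.sum_mul, ← Finset.sum_sub_distrib,
      mul_smul_comm, smul_mul_assoc, ← smul_sub, β, LinearMap.add_apply, LinearMap.comp_apply,
      LinearMap.compl₂_apply, LinearMap.compl₁₂_apply, LinearMap.mul_apply', hleibniz, hu, hv]
  rw [Commute, SemiconjBy, ← sub_eq_zero, hcomm,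
    casimirPairing_comp_add_compl₂_eq_zero e hf hC]

lemma isSkewAdjoint_ad_of_invariant {R L : Type*} [CommRing R] [LieRing L] [LieAlgebra R L]
    {B : L →ₗ[R] L →ₗ[R] R} (hB : ∀ x y z : L, B ⁅x, y⁆ z = B x ⁅y, z⁆) (x : L) :
    B.IsSkewAdjoint (LieAlgebra.ad R L x) := fun y z => by
  show B ⁅x, y⁆ z = B y (-⁅x, z⁆)
  rw [← lie_skew x y, map_neg, LinearMap.neg_apply, hB, map_neg]

section LoopAlgebra

variable {g : Type*} [LieRing g] [LieAlgebra ℂ g]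

attribute [local instance] LieRing.ofAssociativeRing

variable (g) in
noncomputable def loopMode (m : ℤ) :
    g →ₗ[ℂ] UniversalEnvelopingAlgebra ℂ (LaurentPolynomial ℂ ⊗[ℂ] g) :=
  (ι ℂ).toLinearMap ∘ₗ TensorProduct.mk ℂ (LaurentPolynomial ℂ) g (T m)

lemma loopMode_apply (m : ℤ) (y : g) :
    loopMode g m y = ι ℂ ((T m : LaurentPolynomial ℂ) ⊗ₜ[ℂ] y) := rfl

lemma loopMode_mul_sub_mul (a b : ℤ) (x y : g) :
    loopMode g a x * loopMode g b y - loopMode g b y * loopMode g a x =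
      loopMode g (a + b) ⁅x, y⁆ := by
  rw [← Ring.lie_def, loopMode_apply, loopMode_apply, loopMode_apply, ← LieHom.map_lie,
    LieAlgebra.ExtendScalars.bracket_tmul, T_add]

end LoopAlgebra

theorem loop_casimir_summand_commutes_general
    {d : ℕ} {g : Type*} [LieRing g] [LieAlgebra ℂ g]
    (B : g →ₗ[ℂ] g →ₗ[ℂ] ℂ)
    (hB_inv : ∀ x y z : g, B ⁅x, y⁆ z = B x ⁅y, z⁆)
    (e : Module.Basis (Fin d) ℂ g)
    (binv : Matrix (Fin d) (Fin d) ℂ)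
    (h1 : (Matrix.of fun i j => B (e i) (e j)) * binv = 1) :
    ∀ (x : g) (n : ℤ),
      ι ℂ ((T 0 : LaurentPolynomial ℂ) ⊗ₜ[ℂ] x) *
          (∑ i : Fin d, ∑ j : Fin d, binv i j •
            (ι ℂ ((T (-n) : LaurentPolynomial ℂ) ⊗ₜ[ℂ] e i) *
             ι ℂ ((T n : LaurentPolynomial ℂ) ⊗ₜ[ℂ] e j)))
        = (∑ i : Fin d, ∑ j : Fin d, binv i j •
            (ι ℂ ((T (-n) : LaurentPolynomial ℂ) ⊗ₜ[ℂ] e i) *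
             ι ℂ ((T n : LaurentPolynomial ℂ) ⊗ₜ[ℂ] e j))) *
          ι ℂ ((T 0 : LaurentPolynomial ℂ) ⊗ₜ[ℂ] x) := by
  intro x n
  have hGram : LinearMap.toMatrix₂ e e B * binv = 1 := by
    rwa [show LinearMap.toMatrix₂ e e B = Matrix.of fun i j => B (e i) (e j) from
      Matrix.ext fun i j => LinearMap.toMatrix₂_apply e e B i j]
  have hcomm : ∀ (m : ℤ) (y : g),
      loopMode g 0 x * loopMode g m y - loopMode g m y * loopMode g 0 x =
        loopMode g m (LieAlgebra.ad ℂ g x y) := fun m y => by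
    rw [loopMode_mul_sub_mul, zero_add, LieAlgebra.ad_apply]
  exact (commute_casimirPairing_mul e (isSkewAdjoint_ad_of_invariant hB_inv x) hGram
    (loopMode g (-n)) (loopMode g n) (hcomm (-n)) (hcomm n)).eq

/-- For every `x ∈ g` and every `n ∈ ℤ`, the element
`∑ i j, binv i j • ι(t⁻ⁿ ⊗ eᵢ) ι(tⁿ ⊗ eⱼ)` of the universal enveloping algebra of
the loop algebra `g⁽¹⁾` commutes with `ι(t⁰ ⊗ x)`. -/
theorem loop_casimir_summand_commutes
    {d : ℕ} {g : Type*} [LieRing g] [LieAlgebra ℂ g]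
    (B : g →ₗ[ℂ] g →ₗ[ℂ] ℂ)
    (hB_symm : ∀ x y : g, B x y = B y x)
    (hB_inv : ∀ x y z : g, B ⁅x, y⁆ z = B x ⁅y, z⁆)
    (hB_nondeg : ∀ x : g, (∀ y : g, B x y = 0) → x = 0)
    (e : Module.Basis (Fin d) ℂ g)
    (binv : Matrix (Fin d) (Fin d) ℂ)
    (h1 : (Matrix.of fun i j => B (e i) (e j)) * binv = 1)
    (h2 : binv * (Matrix.of fun i j => B (e i) (e j)) = 1) :
    ∀ (x : g) (n : ℤ),
      ι ℂ ((T 0 : LaurentPolynomial ℂ) ⊗ₜ[ℂ] x) *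
          (∑ i : Fin d, ∑ j : Fin d, binv i j •
            (ι ℂ ((T (-n) : LaurentPolynomial ℂ) ⊗ₜ[ℂ] e i) *
             ι ℂ ((T n : LaurentPolynomial ℂ) ⊗ₜ[ℂ] e j)))
        = (∑ i : Fin d, ∑ j : Fin d, binv i j •
            (ι ℂ ((T (-n) : LaurentPolynomial ℂ) ⊗ₜ[ℂ] e i) *
             ι ℂ ((T n : LaurentPolynomial ℂ) ⊗ₜ[ℂ] e j))) *
          ι ℂ ((T 0 : LaurentPolynomial ℂ) ⊗ₜ[ℂ] x) :=
  loop_casimir_summand_commutes_general B hB_inv e binv h1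
end

section
/- For all integers m ≥ 1 and N ≥ m and every index k, the following identity holds in U(g^{(1)}): [ι(t^m ⊗ e_k), Σ_{n=1}^{N} Σ_{i,j} b_{ij} ι(t^{−n} ⊗ e_i) ι(t^{n} ⊗ e_j)] = Σ_{n=1}^{m} Σ_{i,j} b_{ij} ι(t^{m−n} ⊗ [e_k, e_i]) ι(t^{n} ⊗ e_j) + Σ_{n=N+1}^{N+m} Σ_{i,j} b_{ij} ι(t^{m−n} ⊗ e_i) ι(t^{n} ⊗ [e_k, e_j]), where [·,·] on the left is the commutator in U(g^{(1)}). (This is the finite truncation of the paper's computation bringing the quadratic Casimir of the Kac–Moody algebra to Wick normal form.) -/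
/-!
If `b` inverts the Gram matrix of an invariant form `B` in the basis `e`, then `fⱼ = ∑ᵢ bᵢⱼ eᵢ`
is the `B`-dual basis of `e`, and the Casimir tensor `∑ⱼ fⱼ ⊗ eⱼ` is annihilated by
`ad x ⊗ 1 + 1 ⊗ ad x`. Since `[ι(tᵐ ⊗ x), -]` is a derivation of `U(g⁽¹⁾)` shifting degrees by
`m`, the commutator with the `n`-th Casimir term is `hₙ₊ₘ - hₙ`, where
`hₙ = ∑ bᵢⱼ ι(t^{m-n} ⊗ eᵢ) ι(tⁿ ⊗ [x, eⱼ])`; summing over `1 ≤ n ≤ N` telescopes to the two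
boundary blocks, and invariance of the Casimir tensor turns `-∑_{n ≤ m} hₙ` into the first one.
-/

open TensorProduct LaurentPolynomial UniversalEnvelopingAlgebra

namespace Module.Basis

variable {ι R L M : Type*} [Fintype ι] [CommRing R] [LieRing L] [LieAlgebra R L]
  [AddCommGroup M] [Module R M]

noncomputable def dualFamily (e : Basis ι R L) (b : Matrix ι ι R) (j : ι) : L := ∑ i, b i j • e i

variable {B : L →ₗ[R] L →ₗ[R] R} {e : Basis ι R L} {b : Matrix ι ι R}

lemma sum_smul_apply_eq_sum_dualFamily_apply (φ : L →ₗ[R] L →ₗ[R] M) (f : ι → L) :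
    ∑ i, ∑ j, b i j • φ (e i) (f j) = ∑ j, φ (e.dualFamily b j) (f j) := by
  rw [Finset.sum_comm]
  simp [dualFamily, map_sum]

variable [DecidableEq ι]

lemma apply_dualFamily (h : (Matrix.of fun i j => B (e i) (e j)) * b = 1) (l j : ι) :
    B (e l) (e.dualFamily b j) = (1 : Matrix ι ι R) l j := by
  simp [dualFamily, ← h, Matrix.mul_apply, mul_comm]

lemma sum_apply_dualFamily_smul (h : (Matrix.of fun i j => B (e i) (e j)) * b = 1) (y : L) :
    ∑ j, B y (e.dualFamily b j) • e j = y := by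
  suffices ∀ j, B y (e.dualFamily b j) = e.repr y j by simp only [this, e.sum_repr]
  intro j
  suffices B.flip (e.dualFamily b j) = e.coord j from LinearMap.congr_fun this y
  refine e.ext fun l => ?_
  simp [apply_dualFamily h, Matrix.one_apply, Finsupp.single_apply]

lemma sum_apply_smul_dualFamily (h : b * (Matrix.of fun i j => B (e i) (e j)) = 1) (y : L) :
    ∑ i, B (e i) y • e.dualFamily b i = y := by
  suffices ∑ i, (B (e i)).smulRight (e.dualFamily b i) = LinearMap.id by
    simpa using LinearMap.congr_fun this y
  refine e.ext fun l => ?_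
  have hbA (p : ι) : ∑ i, b p i * B (e i) (e l) = (1 : Matrix ι ι R) p l := by
    rw [← h]; rfl
  simp only [LinearMap.sum_apply, LinearMap.smulRight_apply, dualFamily, Finset.smul_sum,
    smul_smul, LinearMap.id_apply]
  rw [Finset.sum_comm]
  simp [← Finset.sum_smul, mul_comm _ (b _ _), hbA, Matrix.one_apply]

lemma casimir_ad_invariant (hB : ∀ x y z : L, B ⁅x, y⁆ z = B x ⁅y, z⁆)
    (h₁ : (Matrix.of fun i j => B (e i) (e j)) * b = 1)
    (h₂ : b * (Matrix.of fun i j => B (e i) (e j)) = 1) (φ : L →ₗ[R] L →ₗ[R] M) (x : L) :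
    ∑ i, ∑ j, b i j • φ ⁅x, e i⁆ (e j) = -∑ i, ∑ j, b i j • φ (e i) ⁅x, e j⁆ := by
  calc ∑ i, ∑ j, b i j • φ ⁅x, e i⁆ (e j)
      = ∑ j, φ ⁅x, e.dualFamily b j⁆ (e j) :=
        sum_smul_apply_eq_sum_dualFamily_apply (φ.compl₁₂ (LieModule.toEnd R L L x) .id) e
    _ = ∑ j, ∑ l, B (e l) ⁅x, e.dualFamily b j⁆ • φ (e.dualFamily b l) (e j) := by
        refine Finset.sum_congr rfl fun j _ => ?_
        conv_lhs => rw [← sum_apply_smul_dualFamily h₂ ⁅x, e.dualFamily b j⁆]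
        simp [map_sum]
    _ = ∑ l, φ (e.dualFamily b l) (∑ j, B ⁅e l, x⁆ (e.dualFamily b j) • e j) := by
        rw [Finset.sum_comm]
        simp [hB, map_sum]
    _ = -∑ j, φ (e.dualFamily b j) ⁅x, e j⁆ := by
        simp only [sum_apply_dualFamily_smul h₁, ← Finset.sum_neg_distrib, ← map_neg, lie_skew]
    _ = -∑ i, ∑ j, b i j • φ (e i) ⁅x, e j⁆ := by
        rw [sum_smul_apply_eq_sum_dualFamily_apply]

end Module.Basis

lemma Finset.sum_Icc_one_add_sub {M : Type*} [AddCommGroup M] (h : ℕ → M) (m N : ℕ) :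
    ∑ n ∈ Icc 1 N, (h (n + m) - h n) = ∑ n ∈ Icc (N + 1) (N + m), h n - ∑ n ∈ Icc 1 m, h n := by
  have shift : ∑ n ∈ Icc 1 N, h (n + m) = ∑ n ∈ Icc (1 + m) (N + m), h n := by
    rw [← map_add_right_Icc, sum_map]
    rfl
  have Icc_one (a : ℕ) : Icc 1 a = Ioc 0 a := by simpa using Icc_add_one_left_eq_Ioc 0 a
  rw [sum_sub_distrib, shift, add_comm 1 m, Icc_add_one_left_eq_Ioc, Icc_add_one_left_eq_Ioc,
    Icc_one, Icc_one, sub_eq_sub_iff_add_eq_add, add_comm,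
    sum_Ioc_consecutive h (Nat.zero_le m) (Nat.le_add_left m N),
    add_comm (∑ n ∈ Ioc N (N + m), h n),
    sum_Ioc_consecutive h (Nat.zero_le N) (Nat.le_add_right N m)]

lemma commutator_smul_mul {R A : Type*} [CommRing R] [Ring A] [Algebra R A] (c : R) (X Y Z : A) :
    X * (c • (Y * Z)) - c • (Y * Z) * X =
      c • ((X * Y - Y * X) * Z) + c • (Y * (X * Z - Z * X)) := by
  rw [mul_smul_comm, smul_mul_assoc, ← smul_sub, ← smul_add]
  congr 1
  noncomm_ring

section GradedFamily

variable {ι R L A : Type*} [Fintype ι] [CommRing R] [LieRing L] [LieAlgebra R L]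
  [Ring A] [Algebra R A] {ρ : ℤ → L →ₗ[R] A}

lemma commutator_sum_smul_mul (hρ : ∀ p q a b, ρ p a * ρ q b - ρ q b * ρ p a = ρ (p + q) ⁅a, b⁆)
    (e : ι → L) (b : Matrix ι ι R) (r p q : ℤ) (x : L) :
    ρ r x * (∑ i, ∑ j, b i j • (ρ p (e i) * ρ q (e j))) -
        (∑ i, ∑ j, b i j • (ρ p (e i) * ρ q (e j))) * ρ r x =
      ∑ i, ∑ j, b i j • (ρ (r + p) ⁅x, e i⁆ * ρ q (e j)) +
        ∑ i, ∑ j, b i j • (ρ p (e i) * ρ (r + q) ⁅x, e j⁆) := by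
  simp only [Finset.mul_sum, Finset.sum_mul, ← Finset.sum_sub_distrib, commutator_smul_mul,
    hρ, Finset.sum_add_distrib]

theorem commutator_truncated_casimir [DecidableEq ι] {B : L →ₗ[R] L →ₗ[R] R}
    (hB : ∀ x y z : L, B ⁅x, y⁆ z = B x ⁅y, z⁆) {e : Module.Basis ι R L} {b : Matrix ι ι R}
    (h₁ : (Matrix.of fun i j => B (e i) (e j)) * b = 1)
    (h₂ : b * (Matrix.of fun i j => B (e i) (e j)) = 1)
    (hρ : ∀ p q a b, ρ p a * ρ q b - ρ q b * ρ p a = ρ (p + q) ⁅a, b⁆) (m N : ℕ) (x : L) :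
    ρ m x * (∑ n ∈ Finset.Icc 1 N, ∑ i, ∑ j, b i j • (ρ (-n) (e i) * ρ n (e j))) -
        (∑ n ∈ Finset.Icc 1 N, ∑ i, ∑ j, b i j • (ρ (-n) (e i) * ρ n (e j))) * ρ m x =
      ∑ n ∈ Finset.Icc 1 m, ∑ i, ∑ j, b i j • (ρ (m - n) ⁅x, e i⁆ * ρ n (e j)) +
        ∑ n ∈ Finset.Icc (N + 1) (N + m), ∑ i, ∑ j, b i j • (ρ (m - n) (e i) * ρ n ⁅x, e j⁆) := by
  have hcas (p q : ℤ) : ∑ i, ∑ j, b i j • (ρ p ⁅x, e i⁆ * ρ q (e j)) =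
      -∑ i, ∑ j, b i j • (ρ p (e i) * ρ q ⁅x, e j⁆) :=
    e.casimir_ad_invariant hB h₁ h₂ ((LinearMap.mul R A).compl₁₂ (ρ p) (ρ q)) x
  set h : ℕ → A := fun n => ∑ i, ∑ j, b i j • (ρ (m - n) (e i) * ρ n ⁅x, e j⁆)
  have hterm (n : ℕ) : ρ m x * (∑ i, ∑ j, b i j • (ρ (-n) (e i) * ρ n (e j))) -
      (∑ i, ∑ j, b i j • (ρ (-n) (e i) * ρ n (e j))) * ρ m x = h (n + m) - h n := by
    have hdeg₁ : (m : ℤ) - ((n + m : ℕ) : ℤ) = -n := by omega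
    have hdeg₂ : ((n + m : ℕ) : ℤ) = m + n := by omega
    rw [commutator_sum_smul_mul hρ, hcas, ← sub_eq_add_neg, neg_add_eq_sub]
    simp only [h]
    rw [hdeg₁, hdeg₂]
  calc _ = ∑ n ∈ Finset.Icc 1 N, (h (n + m) - h n) := by
        rw [Finset.mul_sum, Finset.sum_mul, ← Finset.sum_sub_distrib]
        exact Finset.sum_congr rfl fun n _ => hterm n
    _ = ∑ n ∈ Finset.Icc (N + 1) (N + m), h n - ∑ n ∈ Finset.Icc 1 m, h n :=
        Finset.sum_Icc_one_add_sub h m N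
    _ = _ := by
        rw [sub_eq_neg_add, ← Finset.sum_neg_distrib]
        exact congrArg (· + _) (Finset.sum_congr rfl fun n _ => (hcas _ _).symm)

end GradedFamily

attribute [local instance 100] LieRing.ofAssociativeRing

noncomputable def loopEmbedding {g : Type*} [LieRing g] [LieAlgebra ℂ g] (p : ℤ) :
    g →ₗ[ℂ] UniversalEnvelopingAlgebra ℂ (LaurentPolynomial ℂ ⊗[ℂ] g) :=
  (ι ℂ).toLinearMap ∘ₗ TensorProduct.mk ℂ _ g (T p)

lemma loopEmbedding_apply {g : Type*} [LieRing g] [LieAlgebra ℂ g] (p : ℤ) (a : g) :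
    loopEmbedding p a = ι ℂ ((T p : LaurentPolynomial ℂ) ⊗ₜ[ℂ] a) :=
  rfl

lemma loopEmbedding_commutator {g : Type*} [LieRing g] [LieAlgebra ℂ g] (p q : ℤ) (a b : g) :
    loopEmbedding p a * loopEmbedding q b - loopEmbedding q b * loopEmbedding p a =
      loopEmbedding (p + q) ⁅a, b⁆ := by
  simp only [loopEmbedding_apply]
  rw [T_add, ← Ring.lie_def, ← LieHom.map_lie]
  rfl

theorem loop_casimir_truncated_commutator_general
    {d : ℕ} {g : Type*} [LieRing g] [LieAlgebra ℂ g]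
    (B : g →ₗ[ℂ] g →ₗ[ℂ] ℂ)
    (hB_inv : ∀ x y z : g, B ⁅x, y⁆ z = B x ⁅y, z⁆)
    (e : Module.Basis (Fin d) ℂ g)
    (binv : Matrix (Fin d) (Fin d) ℂ)
    (h1 : (Matrix.of fun i j => B (e i) (e j)) * binv = 1)
    (h2 : binv * (Matrix.of fun i j => B (e i) (e j)) = 1)
    (m N : ℕ) (k : Fin d) :
    ι ℂ ((T (m : ℤ) : LaurentPolynomial ℂ) ⊗ₜ[ℂ] e k) *
        (∑ n ∈ Finset.Icc 1 N, ∑ i : Fin d, ∑ j : Fin d, binv i j •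
          (ι ℂ ((T (-(n : ℤ)) : LaurentPolynomial ℂ) ⊗ₜ[ℂ] e i) *
           ι ℂ ((T (n : ℤ) : LaurentPolynomial ℂ) ⊗ₜ[ℂ] e j))) -
      (∑ n ∈ Finset.Icc 1 N, ∑ i : Fin d, ∑ j : Fin d, binv i j •
        (ι ℂ ((T (-(n : ℤ)) : LaurentPolynomial ℂ) ⊗ₜ[ℂ] e i) *
         ι ℂ ((T (n : ℤ) : LaurentPolynomial ℂ) ⊗ₜ[ℂ] e j))) *
        ι ℂ ((T (m : ℤ) : LaurentPolynomial ℂ) ⊗ₜ[ℂ] e k)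
      = ∑ n ∈ Finset.Icc 1 m, ∑ i : Fin d, ∑ j : Fin d, binv i j •
          (ι ℂ ((T ((m : ℤ) - (n : ℤ)) : LaurentPolynomial ℂ) ⊗ₜ[ℂ] ⁅e k, e i⁆) *
           ι ℂ ((T (n : ℤ) : LaurentPolynomial ℂ) ⊗ₜ[ℂ] e j)) +
        ∑ n ∈ Finset.Icc (N + 1) (N + m), ∑ i : Fin d, ∑ j : Fin d, binv i j •
          (ι ℂ ((T ((m : ℤ) - (n : ℤ)) : LaurentPolynomial ℂ) ⊗ₜ[ℂ] e i) *
           ι ℂ ((T (n : ℤ) : LaurentPolynomial ℂ) ⊗ₜ[ℂ] ⁅e k, e j⁆)) :=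
  commutator_truncated_casimir hB_inv h1 h2 loopEmbedding_commutator m N (e k)

/-- Finite truncation of the Wick-normal-form computation: for
`1 ≤ m ≤ N` and any basis index `k`, in `U(g⁽¹⁾)` the commutator of `ι(tᵐ ⊗ e_k)`
with `∑_{n=1}^{N} ∑_{i,j} binv i j • ι(t⁻ⁿ ⊗ eᵢ) ι(tⁿ ⊗ eⱼ)` equals
`∑_{n=1}^{m} ∑_{i,j} binv i j • ι(t^{m-n} ⊗ [e_k, eᵢ]) ι(tⁿ ⊗ eⱼ)
 + ∑_{n=N+1}^{N+m} ∑_{i,j} binv i j • ι(t^{m-n} ⊗ eᵢ) ι(tⁿ ⊗ [e_k, eⱼ])`. -/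
theorem loop_casimir_truncated_commutator
    {d : ℕ} {g : Type*} [LieRing g] [LieAlgebra ℂ g]
    (B : g →ₗ[ℂ] g →ₗ[ℂ] ℂ)
    (hB_symm : ∀ x y : g, B x y = B y x)
    (hB_inv : ∀ x y z : g, B ⁅x, y⁆ z = B x ⁅y, z⁆)
    (hB_nondeg : ∀ x : g, (∀ y : g, B x y = 0) → x = 0)
    (e : Module.Basis (Fin d) ℂ g)
    (binv : Matrix (Fin d) (Fin d) ℂ)
    (h1 : (Matrix.of fun i j => B (e i) (e j)) * binv = 1)
    (h2 : binv * (Matrix.of fun i j => B (e i) (e j)) = 1)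
    (m N : ℕ) (hm : 1 ≤ m) (hN : m ≤ N) (k : Fin d) :
    ι ℂ ((T (m : ℤ) : LaurentPolynomial ℂ) ⊗ₜ[ℂ] e k) *
        (∑ n ∈ Finset.Icc 1 N, ∑ i : Fin d, ∑ j : Fin d, binv i j •
          (ι ℂ ((T (-(n : ℤ)) : LaurentPolynomial ℂ) ⊗ₜ[ℂ] e i) *
           ι ℂ ((T (n : ℤ) : LaurentPolynomial ℂ) ⊗ₜ[ℂ] e j))) -
      (∑ n ∈ Finset.Icc 1 N, ∑ i : Fin d, ∑ j : Fin d, binv i j •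
        (ι ℂ ((T (-(n : ℤ)) : LaurentPolynomial ℂ) ⊗ₜ[ℂ] e i) *
         ι ℂ ((T (n : ℤ) : LaurentPolynomial ℂ) ⊗ₜ[ℂ] e j))) *
        ι ℂ ((T (m : ℤ) : LaurentPolynomial ℂ) ⊗ₜ[ℂ] e k)
      = ∑ n ∈ Finset.Icc 1 m, ∑ i : Fin d, ∑ j : Fin d, binv i j •
          (ι ℂ ((T ((m : ℤ) - (n : ℤ)) : LaurentPolynomial ℂ) ⊗ₜ[ℂ] ⁅e k, e i⁆) *
           ι ℂ ((T (n : ℤ) : LaurentPolynomial ℂ) ⊗ₜ[ℂ] e j)) +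
        ∑ n ∈ Finset.Icc (N + 1) (N + m), ∑ i : Fin d, ∑ j : Fin d, binv i j •
          (ι ℂ ((T ((m : ℤ) - (n : ℤ)) : LaurentPolynomial ℂ) ⊗ₜ[ℂ] e i) *
           ι ℂ ((T (n : ℤ) : LaurentPolynomial ℂ) ⊗ₜ[ℂ] ⁅e k, e j⁆)) :=
  loop_casimir_truncated_commutator_general B hB_inv e binv h1 h2 m N k
end
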